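/- arXiv:1511.07843 — 11 statements merged into one kernel-verified Lean document; each statement's English description precedes it below -/
import Mathlib

section
/- If a group G is covered by finitely many cosets of subgroups, then G is covered by those cosets among them that correspond to subgroups of finite index in G. -/
open scoped Pointwise

/-- B. H. Neumann's Lemma: if a group is covered by finitely many cosets of
subgroups, then it is covered by those cosets corresponding to subgroups of
finite index. -/
theorem neumann_lemma {G : Type*} [Group G] {ι : Type*} [Fintype ι]
    (g : ι → G) (H : ι → Subgroup G)
    (hcov : ∀ x : G, ∃ i, x ∈ g i • (H i : Set G)) :
    ∀ x : G, ∃ i, (H i).FiniteIndex ∧ x ∈ g i • (H i : Set G) := by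
  classical
  have hcovers : ⋃ i ∈ (Finset.univ : Finset ι), g i • (H i : Set G) = Set.univ := by
    rw [Set.eq_univ_iff_forall]
    intro x
    obtain ⟨i, hi⟩ := hcov x
    exact Set.mem_biUnion (Finset.mem_univ i) hi
  have h := Subgroup.leftCoset_cover_filter_FiniteIndex hcovers
  intro x
  have : x ∈ ⋃ k ∈ (Finset.univ : Finset ι).filter (fun i => (H i).FiniteIndex),
      g k • (H k : Set G) := h ▸ Set.mem_univ x
  simp only [Set.mem_iUnion, Finset.mem_filter, Finset.mem_univ, true_and] at this
  obtain ⟨i, hfi, hx⟩ := this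
  exact ⟨i, hfi, hx⟩
end

section
/- An (abstract) group that is covered by finitely many cyclic subgroups is either cyclic or finite. -/
/-!
If `G` is infinite, B. H. Neumann's lemma lets us discard the members of the cover of infinite
index, so `G` is covered by finitely many infinite cyclic subgroups of finite index. Hence `G` is
torsion-free, and the intersection of these subgroups is a central subgroup of finite index.
The transfer `g ↦ g ^ [G : Z(G)]` into the center is then a homomorphism to an abelian group, so
every commutator has finite order and is therefore trivial. Finally, in the torsion-free abelian
group `G` the map `g ↦ g ^ [G : H]` embeds `G` into a cyclic subgroup `H` of finite index.
-/

open Subgroup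
open scoped Pointwise commutatorElement

namespace Subgroup

variable {G : Type*} [Group G]

theorem exists_mem_filter_finiteIndex_of_cover
    [DecidablePred (FiniteIndex : Subgroup G → Prop)] {S : Finset (Subgroup G)}
    (hcov : ∀ x : G, ∃ H ∈ S, x ∈ H) (x : G) :
    ∃ H ∈ S.filter (fun H => H.FiniteIndex), x ∈ H := by
  have hcovers : ⋃ H ∈ S, (1 : G) • (H : Set G) = Set.univ :=
    Set.eq_univ_of_forall fun y => by simpa using hcov y
  simpa using (leftCoset_cover_filter_FiniteIndex hcovers).ge (Set.mem_univ x)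

instance infinite_of_finiteIndex [Infinite G] (H : Subgroup G) [H.FiniteIndex] : Infinite H :=
  not_finite_iff_infinite.mp fun hH =>
    ((finite_iff_finite_and_finiteIndex H).mpr ⟨hH, ‹_›⟩ : Finite G).false

theorem finiteIndex_center_of_cover {S : Finset (Subgroup G)}
    (hfi : ∀ H ∈ S, H.FiniteIndex) (hcomm : ∀ H ∈ S, IsMulCommutative H)
    (hcov : ∀ x : G, ∃ H ∈ S, x ∈ H) : (center G).FiniteIndex := by
  have : (⨅ H ∈ S, H).FiniteIndex := finiteIndex_iInf' (fun H : Subgroup G => H) hfi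
  refine finiteIndex_of_le (H := ⨅ H ∈ S, H) fun z hz => mem_center_iff.mpr fun g => ?_
  obtain ⟨H, hH, hgH⟩ := hcov g
  have := hcomm H hH
  exact setLike_mul_comm hgH (mem_iInf.mp (mem_iInf.mp hz H) hH)

end Subgroup

instance IsCyclic.isMulTorsionFree_of_infinite {G : Type*} [Group G] [IsCyclic G] [Infinite G] :
    IsMulTorsionFree G :=
  intCyclicMulEquiv.symm.injective.isMulTorsionFree intCyclicMulEquiv.symm.toMonoidHom

theorem IsOfFinOrder.eq_one_of_mem {G : Type*} [Group G] {H : Subgroup G} [IsMulTorsionFree H]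
    {g : G} (hg : IsOfFinOrder g) (hgH : g ∈ H) : g = 1 :=
  congrArg Subtype.val ((Submonoid.isOfFinOrder_coe (x := ⟨g, hgH⟩)).mp hg).eq_one'

open scoped IsMulCommutative in
theorem commutatorElement_pow_index_center {G : Type*} [Group G] [(center G).FiniteIndex]
    (x y : G) : ⁅x, y⁆ ^ (center G).index = 1 := by
  have hcomm : ⁅MonoidHom.transferCenterPow G x, MonoidHom.transferCenterPow G y⁆ = 1 :=
    commutatorElement_eq_one_iff_mul_comm.mpr (mul_comm _ _)
  rw [← MonoidHom.transferCenterPow_apply, map_commutatorElement, hcomm, OneMemClass.coe_one]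

theorem isMulCommutative_of_finiteIndex_center {G : Type*} [Group G] [(center G).FiniteIndex]
    (htf : ∀ g : G, IsOfFinOrder g → g = 1) : IsMulCommutative G :=
  ⟨⟨fun x y => commutatorElement_eq_one_iff_mul_comm.mp <| htf _ <|
    isOfFinOrder_iff_pow_eq_one.mpr ⟨_, Nat.pos_of_ne_zero FiniteIndex.index_ne_zero,
      commutatorElement_pow_index_center x y⟩⟩⟩

open scoped IsMulCommutative in
theorem isCyclic_of_finiteIndex_isCyclic {G : Type*} [Group G] [IsMulCommutative G]
    [IsMulTorsionFree G] (H : Subgroup G) [H.FiniteIndex] [IsCyclic H] : IsCyclic G :=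
  isCyclic_of_injective ((powMonoidHom H.index).codRestrict H H.pow_index_mem)
    fun _ _ h => IsMulTorsionFree.pow_left_injective FiniteIndex.index_ne_zero
      (congrArg Subtype.val h)

open scoped IsMulCommutative in
/-- Baer: a group covered by finitely many cyclic subgroups is either cyclic
or finite. -/
theorem cyclic_or_finite_of_finite_cyclic_cover {G : Type*} [Group G]
    (S : Finset (Subgroup G)) (hcyc : ∀ H ∈ S, IsCyclic H)
    (hcov : ∀ x : G, ∃ H ∈ S, x ∈ H) :
    IsCyclic G ∨ Finite G := by
  classical
  rcases finite_or_infinite G with hG | hG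
  · exact .inr hG
  set T := S.filter (fun H => H.FiniteIndex)
  have hTcov := exists_mem_filter_finiteIndex_of_cover hcov
  have hTfi : ∀ H ∈ T, H.FiniteIndex := fun H hH => (Finset.mem_filter.mp hH).2
  have hTcyc : ∀ H ∈ T, IsCyclic H := fun H hH => hcyc H (Finset.mem_filter.mp hH).1
  have htf : ∀ g : G, IsOfFinOrder g → g = 1 := fun g hg => by
    obtain ⟨H, hH, hgH⟩ := hTcov g
    have := hTfi H hH
    have := hTcyc H hH
    exact hg.eq_one_of_mem hgH
  have := finiteIndex_center_of_cover hTfi (fun H hH => (hTcyc H hH).isMulCommutative) hTcov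
  have := isMulCommutative_of_finiteIndex_center htf
  have : IsMulTorsionFree G := .of_not_isOfFinOrder fun g hg1 hg => hg1 (htf g hg)
  obtain ⟨H, hH, -⟩ := hTcov 1
  have := hTfi H hH
  have := hTcyc H hH
  exact .inl (isCyclic_of_finiteIndex_isCyclic H)
end

section
/- If a group G is covered by finitely many abelian subgroups, then the center Z(G) has finite index in G; conversely, if Z(G) has finite index in G, then G is covered by finitely many abelian subgroups. -/
/-!
If `G` is covered by finitely many abelian subgroups, B. H. Neumann's lemma lets us discard the
members of infinite index. Each remaining `H` is abelian, so `H ≤ C(H)` and `C(H)` has finite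
index; since the `H` cover `G`, the intersection of the `C(H)` is `Z(G)`, which therefore
has finite index. Conversely, as `g` runs over a transversal of `Z(G)`, the subgroups
`⟨g, Z(G)⟩` are abelian and cover `G`.
-/

open scoped Pointwise

namespace Subgroup

variable {G : Type*} [Group G]

theorem exists_finiteIndex_mem_of_cover {S : Finset (Subgroup G)}
    (hS : ∀ x : G, ∃ H ∈ S, x ∈ H) (x : G) : ∃ H ∈ S, H.FiniteIndex ∧ x ∈ H := by
  classical
  have hcovers : ⋃ H ∈ S, (1 : G) • (H : Set G) = Set.univ :=
    Set.eq_univ_of_forall fun y => by simpa using hS y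
  simpa [and_assoc] using Set.ext_iff.mp (leftCoset_cover_filter_FiniteIndex hcovers) x

theorem iInf_centralizer_le_center_of_cover {S : Finset (Subgroup G)}
    (hS : ∀ x : G, ∃ H ∈ S, x ∈ H) : ⨅ H ∈ S, centralizer (H : Set G) ≤ center G := by
  intro z hz
  rw [mem_center_iff]
  intro y
  obtain ⟨H, hH, hy⟩ := hS y
  exact mem_centralizer_iff.mp (mem_iInf.mp (mem_iInf.mp hz H) hH) y hy

theorem center_finiteIndex_of_cover {S : Finset (Subgroup G)}
    (hab : ∀ H ∈ S, IsMulCommutative H) (hS : ∀ x : G, ∃ H ∈ S, x ∈ H) :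
    (center G).FiniteIndex := by
  classical
  set T := S.filter FiniteIndex
  have hT : ∀ x : G, ∃ H ∈ T, x ∈ H := fun x => by
    obtain ⟨H, hH, hfi, hx⟩ := exists_finiteIndex_mem_of_cover hS x
    exact ⟨H, Finset.mem_filter.mpr ⟨hH, hfi⟩, hx⟩
  have hfi : (⨅ H ∈ T, centralizer (H : Set G)).FiniteIndex :=
    finiteIndex_iInf' _ fun H hH => by
      obtain ⟨hHS, hHfi⟩ := Finset.mem_filter.mp hH
      have := hab H hHS
      exact finiteIndex_of_le (le_centralizer H)
  exact finiteIndex_of_le (iInf_centralizer_le_center_of_cover hT)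

theorem isMulCommutative_closure_insert_center (g : G) :
    IsMulCommutative (closure (insert g (center G : Set G))) :=
  isMulCommutative_closure <| by
    rintro x (rfl | hx) y (rfl | hy)
    · rfl
    · exact mem_center_iff.mp hy x
    · exact (mem_center_iff.mp hx y).symm
    · exact (mem_center_iff.mp hx y).symm

theorem mem_closure_insert_out_center (x : G) :
    x ∈ closure (insert (QuotientGroup.mk x : G ⧸ center G).out (center G : Set G)) := by
  set g := (QuotientGroup.mk x : G ⧸ center G).out
  have hg : g⁻¹ * x ∈ center G := QuotientGroup.eq.mp (QuotientGroup.out_eq' _)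
  simpa using mul_mem (subset_closure (Set.mem_insert g _))
    (subset_closure (Set.mem_insert_of_mem g hg))

theorem exists_abelian_cover_of_center_finiteIndex [(center G).FiniteIndex] :
    ∃ S : Finset (Subgroup G),
      (∀ H ∈ S, IsMulCommutative H) ∧ ∀ x : G, ∃ H ∈ S, x ∈ H := by
  classical
  have := Fintype.ofFinite (G ⧸ center G)
  let cover (q : G ⧸ center G) : Subgroup G := closure (insert q.out (center G : Set G))
  refine ⟨Finset.univ.image cover, ?_, fun x => ?_⟩
  · exact Finset.forall_mem_image.mpr fun q _ => isMulCommutative_closure_insert_center q.out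
  · exact ⟨_, Finset.mem_image_of_mem _ (Finset.mem_univ _), mem_closure_insert_out_center x⟩

end Subgroup

/-- Baer: a group admits a finite covering by abelian subgroups if and only if
its center has finite index. -/
theorem finite_abelian_cover_iff_center_finiteIndex {G : Type*} [Group G] :
    (∃ S : Finset (Subgroup G), (∀ H ∈ S, IsMulCommutative H) ∧
      ∀ x : G, ∃ H ∈ S, x ∈ H) ↔ (Subgroup.center G).FiniteIndex :=
  ⟨fun ⟨_, hab, hS⟩ => Subgroup.center_finiteIndex_of_cover hab hS,
    fun _ => Subgroup.exists_abelian_cover_of_center_finiteIndex⟩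
end

section
/- For any group G, any element g ∈ G, and any positive integer i, the subgroup generated by g together with the i-th term Z_i(G) of the upper central series is nilpotent of class at most i. -/
/-!
Write `i = n + 1` and `H = ⟨g⟩ Z_{n+1}(G)`. Modulo `Z_n(G)`, the group `H` maps into `⟨ḡ⟩ Z(G/Z_n(G))`,
which is abelian, so `[H, H] ≤ Z_n(G)`. Each further commutator with `H` moves one step down the
upper central series, so `γ_{n+1}(H) ≤ Z_0(G) = 1`.
-/

namespace Subgroup

variable {G : Type*} [Group G]

theorem sup_center_le_centralizer {K : Subgroup G} (hK : K ≤ centralizer K) :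
    K ⊔ center G ≤ centralizer (K ⊔ center G : Subgroup G) :=
  sup_le (le_centralizer_iff.mpr (sup_le hK (center_le_centralizer _))) (center_le_centralizer _)

theorem commutator_zpowers_sup_upperCentralSeries_succ_le (g : G) (n : ℕ) :
    ⁅zpowers g ⊔ upperCentralSeries G (n + 1), zpowers g ⊔ upperCentralSeries G (n + 1)⁆ ≤
      upperCentralSeries G n := by
  set π := QuotientGroup.mk' (upperCentralSeries G n)
  have hmap : (zpowers g ⊔ upperCentralSeries G (n + 1)).map π ≤ zpowers (π g) ⊔ center _ := by
    rw [map_sup, MonoidHom.map_zpowers]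
    exact sup_le_sup_left (map_le_iff_le_comap.mpr (upperCentralSeriesStep_eq_comap_center _).le) _
  rw [← QuotientGroup.ker_mk' (upperCentralSeries G n), ← map_eq_bot_iff, map_commutator,
    commutator_eq_bot_iff_le_centralizer]
  exact hmap.trans ((sup_center_le_centralizer (le_centralizer _)).trans (centralizer_le hmap))

theorem lowerCentralSeries_succ_le_upperCentralSeries {H : Subgroup G} {k n : ℕ}
    (h : H.lowerCentralSeries k ≤ upperCentralSeries G (n + 1)) :
    H.lowerCentralSeries (k + 1) ≤ upperCentralSeries G n :=
  (commutator_mono h le_top).trans (commutator_upperCentralSeries_top_le G n)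

theorem lowerCentralSeries_add_eq_bot {H : Subgroup G} {k n : ℕ}
    (h : H.lowerCentralSeries k ≤ upperCentralSeries G n) :
    H.lowerCentralSeries (n + k) = ⊥ := by
  induction n generalizing k with
  | zero => simpa using h
  | succ n ih =>
    rw [add_right_comm, add_assoc]
    exact ih (lowerCentralSeries_succ_le_upperCentralSeries h)

end Subgroup

/-- For any `g ∈ G` and `i ≥ 1`, the subgroup `⟨g, Z_i(G)⟩` is nilpotent of
class at most `i`. -/
theorem zpowers_sup_upperCentralSeries_nilpotent {G : Type*} [Group G]
    (g : G) (i : ℕ) (hi : 0 < i) :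
    (⊤ : Subgroup (↥(Subgroup.zpowers g ⊔ Subgroup.upperCentralSeries G i))).lowerCentralSeries i = ⊥ := by
  obtain ⟨n, rfl⟩ := Nat.exists_eq_add_one_of_ne_zero hi.ne'
  rw [← Subgroup.map_subtype_inj, Subgroup.top_subtype_lowerCentralSeries, Subgroup.map_bot]
  exact Subgroup.lowerCentralSeries_add_eq_bot
    (Subgroup.commutator_zpowers_sup_upperCentralSeries_succ_le g n)
end

section
/- A group G has a normal soluble subgroup of finite index if and only if G is covered by finitely many soluble subgroups. -/
/-!
If `N` is a normal soluble subgroup of finite index, the preimages in `G` of the cyclic subgroups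
of the finite group `G ⧸ N` are extensions of `N` by cyclic groups, hence soluble, and finitely
many of them cover `G`. Conversely, by B. H. Neumann's lemma one of finitely many subgroups
covering `G` has finite index, and its normal core is a normal soluble subgroup of finite index.
-/

namespace Subgroup

variable {G Q : Type*} [Group G] [Group Q]

theorem isSolvable_comap (f : G →* Q) (H : Subgroup Q) [Group.IsSolvable f.ker]
    [Group.IsSolvable H] : Group.IsSolvable (H.comap f) :=
  Group.isSolvable_of_ker_le_range (inclusion (ker_le_comap f H)) (f.subgroupComap H)
    fun x hx => ⟨⟨x, congrArg Subtype.val hx⟩, rfl⟩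

theorem isSolvable_normalCore (H : Subgroup G) [Group.IsSolvable H] :
    Group.IsSolvable H.normalCore :=
  Group.isSolvable_of_isSolvable_injective (inclusion_injective H.normalCore_le)

theorem exists_isSolvable_cover_of_finiteIndex (N : Subgroup G) [N.Normal] [Group.IsSolvable N]
    [N.FiniteIndex] : ∃ S : Finset (Subgroup G),
      (∀ H ∈ S, Group.IsSolvable H) ∧ ∀ x : G, ∃ H ∈ S, x ∈ H := by
  classical
  have : Fintype (G ⧸ N) := fintypeOfIndexNeZero FiniteIndex.index_ne_zero
  have : Group.IsSolvable (QuotientGroup.mk' N).ker := by rwa [QuotientGroup.ker_mk']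
  let preimage (q : G ⧸ N) : Subgroup G := (zpowers q).comap (QuotientGroup.mk' N)
  refine ⟨Finset.univ.image preimage, ?_, fun x => ⟨preimage x, ?_, mem_zpowers _⟩⟩
  · exact Finset.forall_mem_image.mpr fun q _ => isSolvable_comap _ _
  · exact Finset.mem_image_of_mem _ (Finset.mem_univ _)

theorem exists_finiteIndex_of_cover {S : Finset (Subgroup G)}
    (hcover : ∀ x : G, ∃ H ∈ S, x ∈ H) : ∃ H ∈ S, H.FiniteIndex :=
  exists_finiteIndex_of_leftCoset_cover (g := fun _ => 1) <| by
    simpa [Set.eq_univ_iff_forall] using hcover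

end Subgroup

/-- A group has a normal soluble subgroup of finite index if and only if it is
covered by finitely many soluble subgroups. -/
theorem virtually_solvable_iff_finite_solvable_cover {G : Type*} [Group G] :
    (∃ N : Subgroup G, N.Normal ∧ IsSolvable N ∧ N.FiniteIndex) ↔
    (∃ S : Finset (Subgroup G), (∀ H ∈ S, IsSolvable H) ∧
      ∀ x : G, ∃ H ∈ S, x ∈ H) := by
  constructor
  · rintro ⟨N, _, hN, _⟩
    have : Group.IsSolvable N := hN
    exact N.exists_isSolvable_cover_of_finiteIndex
  · rintro ⟨S, hsolvable, hcover⟩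
    obtain ⟨H, hHS, _⟩ := Subgroup.exists_finiteIndex_of_cover hcover
    have : Group.IsSolvable H := hsolvable H hHS
    exact ⟨H.normalCore, H.normalCore_normal, H.isSolvable_normalCore, inferInstance⟩
end

section
/- Let G be a finite group with a normal cyclic Sylow p-subgroup P. Then either P ≤ G' (the commutator subgroup) or P ≤ Z(G) (the center). -/
/-!
Let `z` generate `P` and let `g ∈ G` act on `P` by `z ↦ g z g⁻¹ = z ^ k`. Since `P` is normal
of index `m` prime to `p`, `g ^ m ∈ P` centralizes `z`, so `k ^ m ≡ 1` modulo `|P| = p ^ e`.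
If `p ∤ k - 1` then `⁅g, z⁆ = z ^ (k - 1)` generates `P`, so `P ≤ G'`. If `p ∣ k - 1`, lifting the
exponent (`p ∤ m`) upgrades `k ^ m ≡ 1` to `k ≡ 1 [ZMOD p ^ e]`, so `g` centralizes `P`.
-/

open Subgroup
open scoped commutatorElement

theorem pow_dvd_sub_one_of_pow_dvd_pow_sub_one {R : Type*} [CommRing R] [IsDomain R] {p k : R}
    (hp : Prime p) (hk : p ∣ k - 1) {m : ℕ} (hm : ¬p ∣ (m : R)) {e : ℕ} (h : p ^ e ∣ k ^ m - 1) :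
    p ^ e ∣ k - 1 := by
  have hpk : ¬p ∣ k := fun hdvd ↦ hp.not_dvd_one (by simpa using dvd_sub hdvd hk)
  rw [pow_dvd_iff_le_emultiplicity] at h ⊢
  rwa [← one_pow m, emultiplicity_pow_sub_pow_of_prime hp hk hpk hm] at h

section Conjugation

variable {G : Type*} [Group G] {g z : G} {k : ℤ}

theorem conj_pow_eq_zpow_pow (h : g * z * g⁻¹ = z ^ k) :
    ∀ j : ℕ, g ^ j * z * (g ^ j)⁻¹ = z ^ (k ^ j)
  | 0 => by simp
  | j + 1 => by
    calc g ^ (j + 1) * z * (g ^ (j + 1))⁻¹ = g * (g ^ j * z * (g ^ j)⁻¹) * g⁻¹ := by group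
      _ = (g * z * g⁻¹) ^ (k ^ j) := by rw [conj_pow_eq_zpow_pow h j, conj_zpow]
      _ = z ^ (k ^ (j + 1)) := by rw [h, ← zpow_mul, pow_succ']

theorem mem_commutator_of_conj_eq_zpow (h : g * z * g⁻¹ = z ^ k)
    (hk : (k - 1).gcd (orderOf z) = 1) : z ∈ commutator G := by
  have hcomm : ⁅g, z⁆ = z ^ (k - 1) := by rw [commutatorElement_def, h, zpow_sub, zpow_one]
  have hz : z ∈ zpowers ⁅g, z⁆ := hcomm ▸ mem_zpowers_zpow_iff.mpr hk
  exact zpowers_le.mpr (commutator_mem_commutator (mem_top g) (mem_top z)) hz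

end Conjugation

theorem Sylow.commute_or_mem_commutator_of_zpowers_eq {p : ℕ} [Fact p.Prime] {G : Type*}
    [Group G] [Finite G] (P : Sylow p G) [hP : (P : Subgroup G).Normal] {z : G}
    (hz : zpowers z = P) (g : G) : Commute g z ∨ z ∈ commutator G := by
  obtain ⟨k, hk⟩ : ∃ k : ℤ, g * z * g⁻¹ = z ^ k :=
    (mem_zpowers_iff.mp (hz ▸ hP.conj_mem z (hz ▸ mem_zpowers z) g)).imp fun _ ↦ Eq.symm
  obtain ⟨e, he⟩ : ∃ e, orderOf z = p ^ e := by
    rw [← Nat.card_zpowers, hz]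
    exact P.isPGroup'.exists_card_eq
  have hp : Prime (p : ℤ) := Nat.prime_iff_prime_int.mp Fact.out
  by_cases hpk : (p : ℤ) ∣ k - 1
  · left
    have hcent : g ^ (P : Subgroup G).index * z * (g ^ (P : Subgroup G).index)⁻¹ = z := by
      have hmem : g ^ (P : Subgroup G).index ∈ zpowers z := by
        rw [hz]
        exact pow_index_mem _ g
      obtain ⟨i, hi⟩ := mem_zpowers_iff.mp hmem
      rw [← hi, (Commute.zpow_self z i).eq, mul_inv_cancel_right]
    have hpow : (p : ℤ) ^ e ∣ k ^ (P : Subgroup G).index - 1 := by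
      rw [← Nat.cast_pow, ← he, ← Int.modEq_iff_dvd, ← zpow_eq_zpow_iff_modEq, zpow_one,
        ← conj_pow_eq_zpow_pow hk, hcent]
    have hk1 := pow_dvd_sub_one_of_pow_dvd_pow_sub_one hp hpk
      (by exact_mod_cast P.not_dvd_index) hpow
    rw [← Nat.cast_pow, ← he, ← Int.modEq_iff_dvd, ← zpow_eq_zpow_iff_modEq, zpow_one, ← hk] at hk1
    exact mul_inv_eq_iff_eq_mul.mp hk1.symm
  · right
    refine mem_commutator_of_conj_eq_zpow hk ?_
    rw [he, ← Int.isCoprime_iff_gcd_eq_one, Nat.cast_pow]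
    exact (hp.coprime_iff_not_dvd.mpr hpk).symm.pow_right

/-- A normal cyclic Sylow `p`-subgroup of a finite group is contained either
in the commutator subgroup or in the center. -/
theorem normal_cyclic_sylow_le_commutator_or_center {p : ℕ} [Fact p.Prime]
    {G : Type*} [Group G] [Finite G] (P : Sylow p G)
    (hnorm : (P : Subgroup G).Normal) (hcyc : IsCyclic (P : Subgroup G)) :
    (P : Subgroup G) ≤ commutator G ∨ (P : Subgroup G) ≤ Subgroup.center G := by
  obtain ⟨z, hz⟩ := (P : Subgroup G).isCyclic_iff_exists_zpowers_eq_top.mp hcyc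
  rw [← hz, zpowers_le, zpowers_le, mem_center_iff]
  by_cases hcent : ∀ g, Commute g z
  · exact Or.inr hcent
  · obtain ⟨g, hg⟩ := not_forall.mp hcent
    exact Or.inl ((P.commute_or_mem_commutator_of_zpowers_eq hz g).resolve_left hg)
end

section
/- Let G be a finite group that is the product G = M H of a normal subgroup M and a cyclic subgroup H with gcd(|M|, |H|) = 1. Then G can be covered by at most f(|M|) cyclic subgroups, where f depends only on |M|. -/
/-!
Split `x ∈ G` as `x = a * b` with `a, b` powers of `x`, `a ^ |M| = 1` and `b ^ |H| = 1`;
then `a ∈ M` because `|G : M| = |H|` is coprime to `|M|`. An element `b` of order coprime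
to `|M|` is conjugate into the abelian complement `H`, even by an element of `M`: induct on
`|G| + ord b`, move the `p`-part of `b` into a Sylow subgroup of `H` and pass to its
centralizer or, if that `p`-part is central, to the `p'`-part of `b`. So `x` lies in
`⟨a⟩ ⊔ (C_G(a) ⊓ H^d)` for some `a, d ∈ M`, which is cyclic since `a` commutes with
a cyclic group of coprime order. These are at most `|M|²` subgroups.
-/

open Subgroup
open scoped Pointwise

section

variable {G : Type*} [Group G]

theorem exists_mul_eq_of_pow_mul_eq_one {x : G} {m n : ℕ} (hmn : m.Coprime n)
    (hx : x ^ (m * n) = 1) :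
    ∃ a ∈ zpowers x, ∃ b ∈ zpowers x, a * b = x ∧ a ^ m = 1 ∧ b ^ n = 1 := by
  obtain ⟨u, v, huv⟩ := hmn.isCoprime
  refine ⟨x ^ (v * n), zpow_mem (mem_zpowers x) _, x ^ (u * m), zpow_mem (mem_zpowers x) _,
    ?_, ?_, ?_⟩
  · rw [← zpow_add, show v * n + u * m = (1 : ℤ) by linarith, zpow_one]
  · rw [← zpow_natCast, ← zpow_mul,
      show v * n * m = ((m * n : ℕ) : ℤ) * v by push_cast; ring, zpow_mul, zpow_natCast, hx,
      one_zpow]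
  · rw [← zpow_natCast, ← zpow_mul,
      show u * m * n = ((m * n : ℕ) : ℤ) * u by push_cast; ring, zpow_mul, zpow_natCast, hx,
      one_zpow]

theorem Commute.left_mem_zpowers_mul {a b : G} (h : Commute a b)
    (hab : (orderOf a).Coprime (orderOf b)) : a ∈ zpowers (a * b) := by
  obtain ⟨u, v, huv⟩ := hab.isCoprime
  refine ⟨v * orderOf b, ?_⟩
  have hb : b ^ (v * orderOf b) = 1 := by
    rw [mul_comm, zpow_mul, zpow_natCast, pow_orderOf_eq_one, one_zpow]
  have ha : a ^ (u * orderOf a) = 1 := by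
    rw [mul_comm, zpow_mul, zpow_natCast, pow_orderOf_eq_one, one_zpow]
  calc (a * b) ^ (v * orderOf b) = a ^ (u * orderOf a) * a ^ (v * orderOf b) := by
        rw [h.mul_zpow, hb, ha, one_mul, mul_one]
    _ = a := by rw [← zpow_add, huv, zpow_one]

theorem exists_isPGroup_mul_eq {b : G} (hb : 1 < orderOf b) :
    ∃ p : ℕ, p.Prime ∧ p ∣ orderOf b ∧ ∃ a ∈ zpowers b, ∃ c ∈ zpowers b,
      a * c = b ∧ IsPGroup p (zpowers a) ∧ orderOf c < orderOf b := by
  obtain ⟨p, hp, hpb⟩ := Nat.exists_prime_and_dvd hb.ne'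
  obtain ⟨e, r, hpr, hbr⟩ :=
    Nat.exists_eq_pow_mul_and_not_dvd (by omega : orderOf b ≠ 0) p hp.ne_one
  obtain ⟨a, hab, c, hcb, hacb, hae, hcr⟩ := exists_mul_eq_of_pow_mul_eq_one
    ((hp.coprime_iff_not_dvd.mpr hpr).pow_left e) (hbr ▸ pow_orderOf_eq_one b)
  refine ⟨p, hp, hpb, a, hab, c, hcb, hacb, ?_, ?_⟩
  · obtain ⟨j, -, hj⟩ := (Nat.dvd_prime_pow hp).mp (orderOf_dvd_of_pow_eq_one hae)
    exact IsPGroup.of_card (by rw [Nat.card_zpowers, hj])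
  · have hr : 0 < r := Nat.pos_of_ne_zero fun h0 => by rw [h0, mul_zero] at hbr; omega
    have he : e ≠ 0 := by rintro rfl; rw [pow_zero, one_mul] at hbr; exact hpr (hbr ▸ hpb)
    calc orderOf c ≤ r := Nat.le_of_dvd hr (orderOf_dvd_of_pow_eq_one hcr)
      _ < p ^ e * r := lt_mul_left hr (Nat.one_lt_pow he hp.one_lt)
      _ = orderOf b := hbr.symm

namespace Subgroup

theorem mem_of_pow_card_eq_one {M : Subgroup G} [M.Normal]
    (hM : (Nat.card M).Coprime M.index) {a : G} (ha : a ^ Nat.card M = 1) : a ∈ M := by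
  have hQ : (a : G ⧸ M) ^ M.index = 1 := pow_card_eq_one'
  rw [← QuotientGroup.eq_one_iff, ← pow_one (a : G ⧸ M), ← hM.gcd_eq_one, pow_gcd_eq_one]
  exact ⟨by rw [← QuotientGroup.mk_pow, ha, QuotientGroup.mk_one], hQ⟩

theorem IsComplement'.subgroupOf_of_le {D K C : Subgroup G} (h : D.IsComplement' K)
    (hKC : K ≤ C) : (D.subgroupOf C).IsComplement' (K.subgroupOf C) := by
  refine isComplement'_of_disjoint_and_mul_eq_univ ?_ (Set.eq_univ_of_forall fun c => ?_)
  · rw [disjoint_iff_inf_le]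
    rintro x ⟨hxD, hxK⟩
    exact Subtype.ext (h.disjoint.le_bot ⟨mem_subgroupOf.mp hxD, mem_subgroupOf.mp hxK⟩)
  · obtain ⟨⟨d, k⟩, hdk⟩ := h.2 c
    simp only at hdk
    have hdC : (d : G) ∈ C := by
      rw [← mul_inv_cancel_right (d : G) k, hdk]
      exact mul_mem c.2 (inv_mem (hKC k.2))
    exact ⟨⟨d, hdC⟩, mem_subgroupOf.mpr d.2, ⟨k, hKC k.2⟩, mem_subgroupOf.mpr k.2,
      Subtype.ext hdk⟩

theorem IsComplement'.exists_conj_mem_of_isPGroup [Finite G] {D K : Subgroup G}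
    (h : D.IsComplement' K) {p : ℕ} [Fact p.Prime] (hpD : ¬ p ∣ Nat.card D) {a : G}
    (ha : IsPGroup p (zpowers a)) : ∃ g : G, g * a * g⁻¹ ∈ K := by
  obtain ⟨Q⟩ := Sylow.nonempty (p := p) (G := K)
  have hQ : ¬ p ∣ (Q.1.map K.subtype).index := by
    rw [index_map_subtype, h.index_eq_card]
    exact Nat.Prime.not_dvd_mul Fact.out Q.not_dvd_index hpD
  obtain ⟨S, hS⟩ := ha.exists_le_sylow
  obtain ⟨g, hg⟩ := MulAction.exists_smul_eq G S ((Q.2.map K.subtype).toSylow hQ)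
  have hmem : g * a * g⁻¹ ∈ ((g • S : Sylow p G) : Subgroup G) := by
    rw [Sylow.coe_subgroup_smul]
    exact mem_pointwise_smul_iff_inv_smul_mem.mpr (by simpa [mul_assoc] using hS (mem_zpowers a))
  rw [hg, IsPGroup.toSylow_coe] at hmem
  exact ⟨g, map_subtype_le _ hmem⟩

theorem IsComplement'.exists_conj_mem_of_coprime [Finite G] {D K : Subgroup G}
    (h : D.IsComplement' K) [IsMulCommutative K] {b : G}
    (hb : (orderOf b).Coprime (Nat.card D)) : ∃ g : G, g * b * g⁻¹ ∈ K := by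
  induction hn : Nat.card G + orderOf b using Nat.strong_induction_on generalizing G b with
  | _ n ih =>
  obtain rfl | hb1 := eq_or_ne b 1
  · exact ⟨1, by simp [one_mem]⟩
  obtain ⟨p, hp, hpb, a, hab, c, hcb, hacb, ha, hcord⟩ := exists_isPGroup_mul_eq
    (lt_of_le_of_ne (orderOf_pos b) (Ne.symm (mt orderOf_eq_one_iff.mp hb1)))
  have := Fact.mk hp
  have hpD : ¬ p ∣ Nat.card D := (hp.coprime_iff_not_dvd).mp (hb.coprime_dvd_left hpb)
  obtain ⟨g₀, hg₀⟩ := h.exists_conj_mem_of_isPGroup hpD ha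
  set C := centralizer {g₀ * a * g₀⁻¹}
  by_cases hC : C = ⊤
  · -- the `p`-part `a` is central and lies in `K`, so it suffices to conjugate `c` into `K`
    have hcent : ∀ y : G, y * (g₀ * a * g₀⁻¹) = (g₀ * a * g₀⁻¹) * y := fun y =>
      mem_centralizer_singleton_iff.mp ((eq_top_iff' C).mp hC y)
    have hconj : g₀ * a * g₀⁻¹ = a := mul_left_cancel (a := g₀) (by rw [hcent g₀]; group)
    rw [hconj] at hcent hg₀
    obtain ⟨g, hg⟩ :=
      ih _ (by omega) h (hb.coprime_dvd_left (orderOf_dvd_of_mem_zpowers hcb)) rfl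
    refine ⟨g, ?_⟩
    rw [← hacb, show g * (a * c) * g⁻¹ = (g * a * g⁻¹) * (g * c * g⁻¹) by group,
      hcent g, mul_inv_cancel_right]
    exact mul_mem hg₀ hg
  · have hKC : K ≤ C := fun k hk =>
      mem_centralizer_singleton_iff.mpr (setLike_mul_comm hk hg₀)
    have hbC : g₀ * b * g₀⁻¹ ∈ C := by
      obtain ⟨i, rfl⟩ := mem_zpowers_iff.mp hab
      refine mem_centralizer_singleton_iff.mpr ?_
      simpa only [MulAut.conj_apply] using ((Commute.zpow_self b i).map (MulAut.conj g₀)).eq.symm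
    have hord : orderOf (⟨_, hbC⟩ : C) = orderOf b := by
      rw [← orderOf_submonoid]
      exact orderOf_injective (MulAut.conj g₀).toMonoidHom (MulAut.conj g₀).injective _
    have hcard : Nat.card C < Nat.card G :=
      lt_of_le_of_ne (card_le_card_group C) (mt (card_eq_iff_eq_top C).mp hC)
    obtain ⟨g, hg⟩ := ih _ (by omega) (h.subgroupOf_of_le hKC) (b := ⟨_, hbC⟩)
      (hord ▸ hb.coprime_dvd_right (card_comap_dvd_of_injective D C.subtype C.subtype_injective))
      rfl
    exact ⟨g * g₀, by simpa [mul_assoc] using mem_subgroupOf.mp hg⟩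

theorem IsComplement'.exists_mem_conj_mem_of_coprime [Finite G] {D K : Subgroup G}
    (h : D.IsComplement' K) [IsMulCommutative K] {b : G}
    (hb : (orderOf b).Coprime (Nat.card D)) : ∃ d ∈ D, b ∈ MulAut.conj d • K := by
  obtain ⟨g, hg⟩ := h.exists_conj_mem_of_coprime hb
  obtain ⟨⟨d, k⟩, hdk⟩ := h.2 g⁻¹
  simp only at hdk
  refine ⟨d, d.2, mem_pointwise_smul_iff_inv_smul_mem.mpr ?_⟩
  have hd : (d : G) = g⁻¹ * (k : G)⁻¹ := by rw [← hdk, mul_inv_cancel_right]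
  have := mul_mem (mul_mem k.2 hg) (inv_mem k.2)
  simpa [hd, mul_assoc] using this

theorem isCyclic_zpowers_sup_centralizer_inf {a : G} {L : Subgroup G} [IsCyclic L]
    (hcop : (orderOf a).Coprime (Nat.card L)) :
    IsCyclic ↥(zpowers a ⊔ (centralizer {a} ⊓ L)) := by
  obtain ⟨c, hc⟩ := (Subgroup.isCyclic_iff_exists_zpowers_eq_top _).mp
    (isCyclic_of_le (inf_le_right : centralizer {a} ⊓ L ≤ L))
  have hac : Commute a c := (mem_centralizer_singleton_iff.mp (hc ▸ mem_zpowers c).1).symm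
  have hcop' : (orderOf a).Coprime (orderOf c) := by
    rw [← Nat.card_zpowers c, hc]
    exact hcop.coprime_dvd_right (card_dvd_of_le inf_le_right)
  rw [← hc, (Subgroup.isCyclic_iff_exists_zpowers_eq_top _)]
  refine ⟨a * c, le_antisymm ?_ ?_⟩
  · exact zpowers_le.mpr (mul_mem (mem_sup_left (mem_zpowers a)) (mem_sup_right (mem_zpowers c)))
  · exact sup_le (zpowers_le.mpr (hac.left_mem_zpowers_mul hcop'))
      (zpowers_le.mpr (by rw [hac.eq]; exact hac.symm.left_mem_zpowers_mul hcop'.symm))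

end Subgroup
end

/-- If a finite group `G` is a product `G = MH` of a normal subgroup `M` and a
cyclic subgroup `H` of coprime orders, then `G` is covered by boundedly many
(in terms of `|M|`) cyclic subgroups. -/
theorem cover_by_boundedly_many_cyclic_subgroups :
    ∃ f : ℕ → ℕ, ∀ (G : Type) [Group G] [Finite G] (M H : Subgroup G),
      M.Normal → IsCyclic H → Nat.Coprime (Nat.card M) (Nat.card H) →
      (∀ g : G, ∃ m ∈ M, ∃ h ∈ H, g = m * h) →
      ∃ S : Finset (Subgroup G), S.card ≤ f (Nat.card M) ∧
        (∀ K ∈ S, IsCyclic K) ∧ ∀ x : G, ∃ K ∈ S, x ∈ K := by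
  classical
  refine ⟨fun n => n ^ 2, fun G _ _ M H hM hH hco hMH => ?_⟩
  have hc : M.IsComplement' H := isComplement'_of_disjoint_and_mul_eq_univ
    (disjoint_of_coprime_natCard hco) (Set.eq_univ_of_forall fun g => by
      obtain ⟨m, hm, h, hh, rfl⟩ := hMH g
      exact ⟨m, hm, h, hh, rfl⟩)
  let cover : M × M → Subgroup G := fun p =>
    zpowers (p.1 : G) ⊔ (centralizer {(p.1 : G)} ⊓ MulAut.conj (p.2 : G) • H)
  have := Fintype.ofFinite M
  refine ⟨Finset.univ.image cover, ?_, ?_, fun x => ?_⟩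
  · exact Finset.card_image_le.trans (by simp [sq, Nat.card_eq_fintype_card])
  · rintro K hK
    obtain ⟨⟨a, d⟩, -, rfl⟩ := Finset.mem_image.mp hK
    have := (MulEquiv.isCyclic (equivSMul (MulAut.conj (d : G)) H)).mp hH
    refine isCyclic_zpowers_sup_centralizer_inf ?_
    rw [← Nat.card_congr (equivSMul (MulAut.conj (d : G)) H).toEquiv]
    exact hco.coprime_dvd_left (orderOf_dvd_natCard M a.2)
  · obtain ⟨a, hax, b, hbx, rfl, ha, hb⟩ := exists_mul_eq_of_pow_mul_eq_one (x := x) hco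
      (by rw [hc.card_mul_card, pow_card_eq_one'])
    have haM : a ∈ M := mem_of_pow_card_eq_one (hc.symm.index_eq_card ▸ hco) ha
    obtain ⟨d, hd, hbd⟩ := hc.exists_mem_conj_mem_of_coprime
      (hco.symm.coprime_dvd_left (orderOf_dvd_of_pow_eq_one hb))
    have hba : b ∈ centralizer {a} := mem_centralizer_singleton_iff.mpr (setLike_mul_comm hbx hax)
    exact ⟨cover (⟨a, haM⟩, ⟨d, hd⟩), Finset.mem_image_of_mem _ (Finset.mem_univ _),
      mul_mem (mem_sup_left (mem_zpowers a)) (mem_sup_right ⟨hba, hbd⟩)⟩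
end

section
/- In a finite group G, for every k ≥ 2 the subgroup γ_k*(G) generated by all γ_k*-commutators equals the nilpotent residual γ_∞(G), the last term of the lower central series of G. -/
open scoped commutatorElement

/-- The set of `γₖ*`-commutators of a group, indexed so that
`gammaStarSet G k` is the set of `γₖ*`-commutators: every element is a
`γ₁*`-commutator, and for `k ≥ 2` an element `g` is a `γₖ*`-commutator if
`g = ⁅a, b⁆` where `a` is a power of a `γ_{k-1}*`-commutator, `b ∈ G`, and
the orders of `a` and `b` are coprime. -/
def gammaStarSet (G : Type*) [Group G] : ℕ → Set G
  | 0 => Set.univ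
  | 1 => Set.univ
  | (k + 2) => {g : G | ∃ a b : G,
      (∃ x ∈ gammaStarSet G (k + 1), ∃ n : ℕ, a = x ^ n) ∧
      Nat.Coprime (orderOf a) (orderOf b) ∧ g = ⁅a, b⁆}

/-!
Modulo `γ_∞(G)` the group is nilpotent, and in a nilpotent group elements of coprime order commute
(induct on the class: the commutator is central, so its order divides both orders). Hence every
`γₖ*`-commutator lies in `γ_∞(G)`.

Conversely, `γₖ*`-commutators of a quotient lift to `γₖ*`-commutators of `G`: a preimage `x` of
`x̄` can be replaced by a power with the same image whose order only involves primes dividing the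
order of `x̄`, so coprimality survives the lift. It therefore suffices to show that a finite group
with no nontrivial `γₖ*`-commutators is nilpotent. Induct on `k` and, for fixed `k`, on `|G|`: in
a minimal counterexample `γ_∞(G)` lies in every nontrivial normal subgroup. A nontrivial
`γ_{k-1}*`-commutator has a power `y` of prime order `p`, which commutes with every element of
order prime to `p`. Writing `G = P · O^p(G)` with `P` a Sylow `p`-subgroup containing `y`, the
normal closure of `y` lies in `P` and centralizes `O^p(G)`; so `γ_∞(G) = [γ_∞(G), G] = [γ_∞(G), P]`,
which forces `γ_∞(G) = 1` because `P` is nilpotent.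
-/

open Subgroup

theorem Nat.exists_mul_eq_coprime_dvd_pow (m : ℕ) {n : ℕ} (hn : n ≠ 0) :
    ∃ u v, u * v = n ∧ v.Coprime m ∧ u ∣ m ^ n := by
  induction n using Nat.strong_induction_on with
  | _ n ih =>
    by_cases hnm : n.Coprime m
    · exact ⟨1, n, one_mul n, hnm, one_dvd _⟩
    obtain ⟨n', hn'⟩ := Nat.gcd_dvd_left n m
    have hg : 1 < n.gcd m :=
      lt_of_le_of_ne (Nat.gcd_pos_of_pos_left m (Nat.pos_of_ne_zero hn)) (Ne.symm hnm)
    have hn'0 : n' ≠ 0 := by rintro rfl; exact hn (by simpa using hn')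
    have hlt : n' < n := by nlinarith [Nat.pos_of_ne_zero hn'0]
    obtain ⟨u, v, rfl, hv, hu⟩ := ih n' hlt hn'0
    refine ⟨n.gcd m * u, v, by rw [mul_assoc, ← hn'], hv, ?_⟩
    calc n.gcd m * u ∣ m * m ^ (u * v) := mul_dvd_mul (Nat.gcd_dvd_right n m) hu
      _ = m ^ (u * v + 1) := (_root_.pow_succ' m _).symm
      _ ∣ m ^ n := pow_dvd_pow m hlt

section

variable {G Q : Type*} [Group G] [Group Q]

theorem exists_pow_map_eq_and_orderOf_dvd (f : G →* Q) {x : G} (hx : orderOf x ≠ 0) :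
    ∃ s, f (x ^ s) = f x ∧ orderOf (x ^ s) ∣ orderOf (f x) ^ orderOf x := by
  obtain ⟨u, v, huv, hv, hu⟩ := Nat.exists_mul_eq_coprime_dvd_pow (orderOf (f x)) hx
  obtain ⟨s, hs1, hs0⟩ := Nat.chineseRemainder hv.symm 1 0
  refine ⟨s, ?_, (orderOf_dvd_of_pow_eq_one ?_).trans hu⟩
  · rw [map_pow, pow_eq_pow_iff_modEq.mpr hs1, pow_one]
  · rw [← pow_mul, ← orderOf_dvd_iff_pow_eq_one, ← huv, mul_comm s]
    exact mul_dvd_mul_left u (Nat.modEq_zero_iff_dvd.mp hs0)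

theorem map_mem_gammaStarSet (f : G →* Q) :
    ∀ {k : ℕ} {x : G}, x ∈ gammaStarSet G k → f x ∈ gammaStarSet Q k
  | 0, _, _ => trivial
  | 1, _, _ => trivial
  | _ + 2, _, ⟨_, b, ⟨x, hx, n, rfl⟩, hco, rfl⟩ =>
    ⟨f x ^ n, f b, ⟨f x, map_mem_gammaStarSet f hx, n, rfl⟩,
      (hco.coprime_dvd_left (map_pow f x n ▸ orderOf_map_dvd f _)).coprime_dvd_right
        (orderOf_map_dvd f b),
      by rw [map_commutatorElement, map_pow]⟩

theorem exists_mem_gammaStarSet_map_eq [Finite G] {f : G →* Q} (hf : Function.Surjective f) :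
    ∀ {k : ℕ} {y : Q}, y ∈ gammaStarSet Q k → ∃ x ∈ gammaStarSet G k, f x = y
  | 0, y, _ => (hf y).imp fun _ h => ⟨trivial, h⟩
  | 1, y, _ => (hf y).imp fun _ h => ⟨trivial, h⟩
  | _ + 2, _, ⟨_, b', ⟨_, hy, n, rfl⟩, hco, rfl⟩ => by
    obtain ⟨x, hx, rfl⟩ := exists_mem_gammaStarSet_map_eq hf hy
    obtain ⟨b, rfl⟩ := hf b'
    obtain ⟨s, hs, hsd⟩ := exists_pow_map_eq_and_orderOf_dvd f (orderOf_pos (x ^ n)).ne'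
    obtain ⟨t, ht, htd⟩ := exists_pow_map_eq_and_orderOf_dvd f (orderOf_pos b).ne'
    refine ⟨⁅(x ^ n) ^ s, b ^ t⁆, ⟨_, _, ⟨x, hx, n * s, (pow_mul x n s).symm⟩, ?_, rfl⟩,
      by rw [map_commutatorElement, hs, ht, map_pow]⟩
    rw [map_pow] at hsd
    exact (((hco.pow_left _).pow_right _).coprime_dvd_left hsd).coprime_dvd_right htd

theorem image_gammaStarSet [Finite G] {f : G →* Q} (hf : Function.Surjective f) (k : ℕ) :
    f '' gammaStarSet G k = gammaStarSet Q k :=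
  Set.Subset.antisymm (Set.image_subset_iff.mpr fun _ => map_mem_gammaStarSet f)
    fun _ hy => exists_mem_gammaStarSet_map_eq hf hy

theorem gammaStarSet_quotient_subset_one [Finite G] {N : Subgroup G} [N.Normal] {k : ℕ}
    (h : gammaStarSet G k ⊆ N) : gammaStarSet (G ⧸ N) k ⊆ {1} := by
  rw [← image_gammaStarSet (QuotientGroup.mk'_surjective N)]
  rintro _ ⟨x, hx, rfl⟩
  exact (QuotientGroup.eq_one_iff x).mpr (h hx)

theorem Subgroup.normal_closure_of_conj_mem {s : Set G} (hs : ∀ g, ∀ x ∈ s, g * x * g⁻¹ ∈ s) :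
    (closure s).Normal := by
  have hconj : Group.conjugatesOfSet s ⊆ s := fun x hx => by
    obtain ⟨a, ha, hax⟩ := Group.mem_conjugatesOfSet_iff.mp hx
    obtain ⟨c, rfl⟩ := isConj_iff.mp hax
    exact hs c a ha
  have : normalClosure s = closure s :=
    le_antisymm (closure_mono hconj) closure_le_normalClosure
  exact this ▸ normalClosure_normal

theorem normal_closure_gammaStarSet (k : ℕ) : (closure (gammaStarSet G k)).Normal :=
  normal_closure_of_conj_mem fun g _ hx => by
    simpa using map_mem_gammaStarSet (MulAut.conj g).toMonoidHom hx

end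

section Nilpotent

variable {G : Type*} [Group G]

theorem commutatorElement_pow_orderOf_eq_one {a b : G} (h : ⁅a, b⁆ ∈ center G) :
    ⁅a, b⁆ ^ orderOf b = 1 := by
  have hab : a * b * a⁻¹ = ⁅a, b⁆ * b := by group
  have key := conj_pow (a := a) (b := b) (i := orderOf b)
  rwa [hab, Commute.mul_pow (mem_center_iff.mp h b).symm, pow_orderOf_eq_one, mul_one, mul_one,
    mul_inv_cancel] at key

theorem Group.IsNilpotent.commute_of_coprime [IsNilpotent G] {a b : G}
    (h : (orderOf a).Coprime (orderOf b)) : Commute a b := by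
  refine nilpotent_center_quotient_ind
    (P := fun G _ _ => ∀ a b : G, (orderOf a).Coprime (orderOf b) → Commute a b) G
    (fun G _ _ a b _ => Subsingleton.elim a b ▸ Commute.refl a) (fun G _ _ ih a b h => ?_) a b h
  let f := QuotientGroup.mk' (center G)
  have hcentral : ⁅a, b⁆ ∈ center G := by
    rw [← QuotientGroup.ker_mk' (center G), MonoidHom.mem_ker, map_commutatorElement,
      commutatorElement_eq_one_iff_commute]
    exact ih _ _ ((h.coprime_dvd_left (orderOf_map_dvd f a)).coprime_dvd_right
      (orderOf_map_dvd f b))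
  have hb : orderOf ⁅a, b⁆ ∣ orderOf b :=
    orderOf_dvd_of_pow_eq_one (commutatorElement_pow_orderOf_eq_one hcentral)
  have ha : orderOf ⁅a, b⁆ ∣ orderOf a := by
    rw [← orderOf_inv, commutatorElement_inv]
    refine orderOf_dvd_of_pow_eq_one (commutatorElement_pow_orderOf_eq_one ?_)
    exact commutatorElement_inv a b ▸ inv_mem hcentral
  rw [← commutatorElement_eq_one_iff_commute, ← orderOf_eq_one_iff]
  exact Nat.eq_one_of_dvd_coprimes h ha hb

theorem Subgroup.eq_bot_of_le_commutator_of_isNilpotent {M P : Subgroup G}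
    (hP : Group.IsNilpotent P) (hMP : M ≤ P) (h : M ≤ ⁅M, P⁆) : M = ⊥ := by
  obtain ⟨n, hn⟩ := (Subgroup.isNilpotent_iff_lowerCentralSeries P).mp hP
  have hle : ∀ n, M ≤ P.lowerCentralSeries n := fun n => by
    induction n with
    | zero => exact hMP
    | succ n ih => exact h.trans (commutator_mono ih le_rfl)
  exact le_bot_iff.mp (hn ▸ hle n)

end Nilpotent

section Residual

variable {G Q : Type*} [Group G] [Group Q]

def nilpotentResidual (G : Type*) [Group G] : Subgroup G :=
  ⨅ n : ℕ, (⊤ : Subgroup G).lowerCentralSeries n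

instance nilpotentResidual_normal : (nilpotentResidual G).Normal :=
  normal_iInf_normal fun _ => inferInstance

theorem exists_lowerCentralSeries_eq_nilpotentResidual [Finite G] :
    ∃ n, ∀ m, n ≤ m → (⊤ : Subgroup G).lowerCentralSeries m = nilpotentResidual G := by
  obtain ⟨n, hn⟩ :=
    WellFoundedLT.antitone_chain_condition (Subgroup.lowerCentralSeries_antitone (⊤ : Subgroup G))
  have h : (⊤ : Subgroup G).lowerCentralSeries n = nilpotentResidual G :=
    le_antisymm (le_iInf fun m => (le_total n m).elim (fun hm => (hn m hm).le)
      fun hm => Subgroup.lowerCentralSeries_antitone _ hm) (iInf_le _ n)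
  exact ⟨n, fun m hm => (hn m hm).symm.trans h⟩

theorem commutator_nilpotentResidual_top [Finite G] :
    ⁅nilpotentResidual G, ⊤⁆ = nilpotentResidual G := by
  obtain ⟨n, hn⟩ := exists_lowerCentralSeries_eq_nilpotentResidual (G := G)
  have h := hn (n + 1) n.le_succ
  rwa [Subgroup.lowerCentralSeries_succ, hn n le_rfl] at h

theorem map_nilpotentResidual_le (f : G →* Q) :
    (nilpotentResidual G).map f ≤ nilpotentResidual Q :=
  le_iInf fun n => (map_mono (iInf_le _ n)).trans <| by
    rw [map_lowerCentralSeries]; exact lowerCentralSeries_mono n le_top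

theorem nilpotentResidual_le_ker (f : G →* Q) (h : nilpotentResidual Q = ⊥) :
    nilpotentResidual G ≤ f.ker :=
  map_le_iff_le_comap.mp (h ▸ map_nilpotentResidual_le f)

theorem isNilpotent_quotient_nilpotentResidual [Finite G] :
    Group.IsNilpotent (G ⧸ nilpotentResidual G) := by
  obtain ⟨n, hn⟩ := exists_lowerCentralSeries_eq_nilpotentResidual (G := G)
  refine Subgroup.nilpotent_iff_lowerCentralSeries.mpr ⟨n, ?_⟩
  rw [← map_top_of_surjective _ (QuotientGroup.mk'_surjective (nilpotentResidual G)),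
    ← map_lowerCentralSeries, hn n le_rfl, Subgroup.map_eq_bot_iff, QuotientGroup.ker_mk']

theorem gammaStarSet_subset_nilpotentResidual [Finite G] (k : ℕ) :
    gammaStarSet G (k + 2) ⊆ nilpotentResidual G := by
  rintro _ ⟨a, b, -, hab, rfl⟩
  have := isNilpotent_quotient_nilpotentResidual (G := G)
  let f := QuotientGroup.mk' (nilpotentResidual G)
  rw [SetLike.mem_coe, ← QuotientGroup.ker_mk' (nilpotentResidual G), MonoidHom.mem_ker,
    map_commutatorElement, commutatorElement_eq_one_iff_commute]
  exact Group.IsNilpotent.commute_of_coprime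
    ((hab.coprime_dvd_left (orderOf_map_dvd f a)).coprime_dvd_right (orderOf_map_dvd f b))

end Residual

section PResidual

variable {G : Type*} [Group G] (p : ℕ)

/-- `O^p(G)`: the quotient by it is the largest `p`-group quotient of a finite group `G`. -/
def pResidual (G : Type*) [Group G] : Subgroup G :=
  closure {g : G | ¬ p ∣ orderOf g}

instance pResidual_normal : (pResidual p G).Normal :=
  normal_closure_of_conj_mem fun g x hx => by
    change ¬ p ∣ orderOf (g * x * g⁻¹)
    rwa [← MulAut.conj_apply, MulEquiv.orderOf_eq]

variable [Fact p.Prime] [Finite G]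

theorem isPGroup_quotient_pResidual : IsPGroup p (G ⧸ pResidual p G) := by
  intro g
  induction g using QuotientGroup.induction_on with | H g =>
  refine ⟨(orderOf g).factorization p, ?_⟩
  rw [← QuotientGroup.mk_pow, QuotientGroup.eq_one_iff]
  apply Subgroup.subset_closure
  change ¬ p ∣ orderOf (g ^ p ^ (orderOf g).factorization p)
  rw [orderOf_pow_of_dvd (pow_ne_zero _ (Fact.out : p.Prime).ne_zero) (Nat.ordProj_dvd _ _)]
  exact Nat.not_dvd_ordCompl Fact.out (orderOf_pos g).ne'

variable {p}

theorem Sylow.sup_pResidual_eq_top (P : Sylow p G) : (P : Subgroup G) ⊔ pResidual p G = ⊤ := by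
  obtain ⟨e, he⟩ := IsPGroup.iff_card.mp (isPGroup_quotient_pResidual p (G := G))
  have hcop : ((pResidual p G).index).Coprime (P : Subgroup G).index := by
    rw [index_eq_card, he]
    exact Nat.Coprime.pow_left e ((Nat.Prime.coprime_iff_not_dvd Fact.out).mpr P.not_dvd_index)
  exact index_eq_one.mp
    (Nat.eq_one_of_dvd_coprimes hcop (index_dvd_of_le le_sup_right) (index_dvd_of_le le_sup_left))

theorem nilpotentResidual_eq_bot_of_le_normalClosure (P : Sylow p G) {y : G} (hyP : y ∈ P)
    (hy : ∀ b : G, ¬ p ∣ orderOf b → Commute y b) (hM : nilpotentResidual G ≤ normalClosure {y}) :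
    nilpotentResidual G = ⊥ := by
  have hyK : ∀ k ∈ pResidual p G, k * y = y * k := fun k hk =>
    mem_centralizer_singleton_iff.mp <| (closure_le _).mpr
      (fun b hb => mem_centralizer_singleton_iff.mpr (hy b hb).eq.symm) hk
  have hdecomp : ∀ h : G, ∃ g ∈ P, ∃ k ∈ pResidual p G, g * k = h := fun h =>
    mem_sup_of_normal_right.mp (P.sup_pResidual_eq_top ▸ mem_top h)
  have hMP : nilpotentResidual G ≤ P := hM.trans <| (closure_le _).mpr fun x hx => by
    obtain ⟨a, ha, hax⟩ := Group.mem_conjugatesOfSet_iff.mp hx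
    obtain ⟨c, rfl⟩ := isConj_iff.mp (Set.mem_singleton_iff.mp ha ▸ hax)
    obtain ⟨g, hg, k, hk, rfl⟩ := hdecomp c
    have hconj : g * k * y * (g * k)⁻¹ = g * y * g⁻¹ := by
      rw [mul_inv_rev, mul_assoc g k y, hyK k hk]; group
    rw [SetLike.mem_coe, hconj]
    exact mul_mem (mul_mem hg hyP) (inv_mem hg)
  have hMC : nilpotentResidual G ≤ centralizer (pResidual p G) :=
    hM.trans (normalClosure_le_normal (Set.singleton_subset_iff.mpr (mem_centralizer_iff.mpr hyK)))
  refine eq_bot_of_le_commutator_of_isNilpotent P.isPGroup'.isNilpotent hMP ?_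
  conv_lhs => rw [← commutator_nilpotentResidual_top]
  refine commutator_le.mpr fun m hm h _ => ?_
  obtain ⟨g, hg, k, hk, rfl⟩ := hdecomp h
  have hkm : k * m⁻¹ = m⁻¹ * k :=
    (Commute.inv_right (mem_centralizer_iff.mp (hMC hm) k hk : Commute k m)).eq
  have hcomm : ⁅m, g * k⁆ = ⁅m, g⁆ := calc
    ⁅m, g * k⁆ = m * g * (k * m⁻¹) * k⁻¹ * g⁻¹ := by rw [commutatorElement_def]; group
    _ = ⁅m, g⁆ := by rw [hkm, commutatorElement_def]; group
  rw [hcomm]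
  exact commutator_mem_commutator hm hg

end PResidual

theorem nilpotentResidual_eq_bot_of_minimal {G : Type*} [Group G] [Finite G] {k : ℕ}
    (hk : gammaStarSet G (k + 1) ⊆ {1} → nilpotentResidual G = ⊥)
    (h : gammaStarSet G (k + 2) ⊆ {1})
    (hmin : ∀ N : Subgroup G, N.Normal → N ≠ ⊥ → nilpotentResidual G ≤ N) :
    nilpotentResidual G = ⊥ := by
  by_cases h1 : gammaStarSet G (k + 1) ⊆ {1}
  · exact hk h1
  obtain ⟨x, hx, hx1⟩ := Set.not_subset.mp h1
  obtain ⟨p, hp, hpx⟩ := Nat.exists_prime_and_dvd (mt orderOf_eq_one_iff.mp hx1)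
  have := Fact.mk hp
  set y := x ^ (orderOf x / p)
  have hy : orderOf y = p := orderOf_pow_orderOf_div (orderOf_pos x).ne' hpx
  obtain ⟨P, hP⟩ := (IsPGroup.of_card (n := 1) (by rw [Nat.card_zpowers, hy, pow_one]) :
    IsPGroup p (zpowers y)).exists_le_sylow
  refine nilpotentResidual_eq_bot_of_le_normalClosure P (hP (mem_zpowers y)) (fun b hb => ?_)
    (hmin _ inferInstance ?_)
  · have hyb : ⁅y, b⁆ ∈ gammaStarSet G (k + 2) :=
      ⟨y, b, ⟨x, hx, _, rfl⟩, hy ▸ (Nat.Prime.coprime_iff_not_dvd hp).mpr hb, rfl⟩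
    exact commutatorElement_eq_one_iff_commute.mp (h hyb)
  · rw [Ne, normalClosure_eq_bot_iff, Set.singleton_subset_iff, Set.mem_singleton_iff,
      ← orderOf_eq_one_iff, hy]
    exact hp.ne_one

universe u

theorem nilpotentResidual_eq_bot_of_gammaStarSet_subset_one :
    ∀ (k : ℕ) (G : Type u) [Group G] [Finite G], gammaStarSet G (k + 1) ⊆ {1} →
      nilpotentResidual G = ⊥
  | 0, _, _, _, h => eq_bot_iff.mpr fun x _ => mem_bot.mpr (h (Set.mem_univ x))
  | k + 1, G, _, _, h => by
    obtain ⟨c, hc⟩ : ∃ c, Nat.card G = c := ⟨_, rfl⟩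
    induction c using Nat.strong_induction_on generalizing G with
    | _ c ih =>
      refine nilpotentResidual_eq_bot_of_minimal
        (nilpotentResidual_eq_bot_of_gammaStarSet_subset_one k G) h fun N _ hN => ?_
      have hcard : Nat.card (G ⧸ N) < c := by
        rw [← hc, card_eq_card_quotient_mul_card_subgroup N]
        exact lt_mul_of_one_lt_right Nat.card_pos ((one_lt_card_iff_ne_bot N).mpr hN)
      have hquot : gammaStarSet (G ⧸ N) (k + 2) ⊆ {1} :=
        gammaStarSet_quotient_subset_one (h.trans (Set.singleton_subset_iff.mpr N.one_mem))
      rw [← QuotientGroup.ker_mk' N]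
      exact nilpotentResidual_le_ker _ (ih _ hcard (G ⧸ N) inferInstance inferInstance hquot rfl)

theorem closure_gammaStarSet_eq_nilpotentResidual (k : ℕ) (G : Type u) [Group G] [Finite G] :
    closure (gammaStarSet G (k + 2)) = nilpotentResidual G := by
  refine le_antisymm ((closure_le _).mpr (gammaStarSet_subset_nilpotentResidual k)) ?_
  have := normal_closure_gammaStarSet (G := G) (k + 2)
  rw [← QuotientGroup.ker_mk' (closure _)]
  exact nilpotentResidual_le_ker _ (nilpotentResidual_eq_bot_of_gammaStarSet_subset_one (k + 1) _
    (gammaStarSet_quotient_subset_one subset_closure))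

/-- In a finite group, for every `k ≥ 2` the subgroup generated by all
`γₖ*`-commutators is the nilpotent residual `γ_∞(G)`. -/
theorem gammaStar_eq_nilpotentResidual {G : Type*} [Group G] [Finite G]
    (k : ℕ) (hk : 2 ≤ k) :
    Subgroup.closure (gammaStarSet G k) = ⨅ n : ℕ, (⊤ : Subgroup G).lowerCentralSeries n := by
  obtain ⟨j, rfl⟩ : ∃ j, k = j + 2 := ⟨k - 2, by omega⟩
  exact closure_gammaStarSet_eq_nilpotentResidual j G
end

section
/- The profinite group C_p × Z_p, where C_p is cyclic of prime order p and Z_p is the additive group of p-adic integers, can be covered by countably many procyclic (closed) subgroups but cannot be covered by countably many open procyclic subgroups. -/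
/-!
The closure of the cyclic subgroup generated by `x ∈ C_p × ℤ_p` is its orbit `{c • x | c ∈ ℤ_p}`
under the natural `ℤ_p`-module structure: the orbit is compact, hence closed, and `ℤ` is dense in
`ℤ_p`. Writing `y = u p^m` with `u` a unit and `ū` its residue mod `p`, we get
`(a, y) = u • (a / ū, p^m)`, so the countably many procyclic subgroups generated by the elements
`(b, n)` with `n ∈ ℕ` cover the group. On the other hand `(1, 0) = c • x` forces `x₂ = 0`, and
then the procyclic subgroup lies in `C_p × {0}`, which is not open because `0` is not isolated in `ℤ_p`.
-/

instance (n : ℕ) : TopologicalSpace (ZMod n) := ⊥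

instance (n : ℕ) : DiscreteTopology (ZMod n) := ⟨rfl⟩

open Filter Topology AddSubgroup

namespace PadicInt

variable {p : ℕ} [Fact p.Prime]

theorem continuous_toZMod : Continuous (toZMod : ℤ_[p] → ZMod p) := by
  refine continuous_of_continuousAt_zero (toZMod (p := p)) ?_
  rw [ContinuousAt, map_zero, nhds_discrete (ZMod p), tendsto_pure]
  filter_upwards [Metric.ball_mem_nhds (0 : ℤ_[p]) one_pos] with c hc
  rw [← RingHom.mem_ker, ker_toZMod, IsLocalRing.mem_maximalIdeal, mem_nonunits]
  simpa using hc

theorem not_isOpen_singleton_zero : ¬ IsOpen ({0} : Set ℤ_[p]) := by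
  intro h
  have hpow : Tendsto (fun i : ℕ => (p : ℤ_[p]) ^ i) atTop (𝓝 0) :=
    tendsto_pow_atTop_nhds_zero_of_norm_lt_one ((norm_lt_one_iff_dvd _).2 dvd_rfl)
  obtain ⟨i, hi⟩ := (hpow.eventually_mem (h.mem_nhds rfl)).exists
  exact pow_ne_zero i (Nat.cast_ne_zero.2 (Fact.out : p.Prime).ne_zero) hi

theorem coe_topologicalClosure_zmultiples (x : ZMod p × ℤ_[p]) :
    ((zmultiples x).topologicalClosure : Set (ZMod p × ℤ_[p])) =
      Set.range fun c : ℤ_[p] => (toZMod c * x.1, c * x.2) := by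
  set f := fun c : ℤ_[p] => (toZMod c * x.1, c * x.2)
  have hf : Continuous f :=
    (continuous_toZMod.mul continuous_const).prodMk (continuous_id.mul continuous_const)
  have hf_int (k : ℤ) : f k = k • x := by
    simp [f, Prod.smul_def, zsmul_eq_mul]
  have hzmult : (zmultiples x : Set (ZMod p × ℤ_[p])) = f '' Set.range Int.cast := by
    ext y
    simp [mem_zmultiples_iff, hf_int]
  refine subset_antisymm ?_ ?_
  · refine closure_minimal ?_ (isCompact_range hf).isClosed
    rw [hzmult]
    exact Set.image_subset_range _ _
  · rw [topologicalClosure_coe, hzmult, ← Set.image_univ, ← denseRange_intCast.closure_eq]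
    exact image_closure_subset_closure_image hf

theorem exists_mem_topologicalClosure_zmultiples_natCast (g : ZMod p × ℤ_[p]) :
    ∃ (b : ZMod p) (n : ℕ), g ∈ (zmultiples (b, (n : ℤ_[p]))).topologicalClosure := by
  obtain ⟨a, y⟩ := g
  simp only [← SetLike.mem_coe, coe_topologicalClosure_zmultiples]
  by_cases hy : y = 0
  · exact ⟨a, 0, 1, by simp [hy]⟩
  · set u : ℤ_[p] := ↑(unitCoeff hy)
    have hu : toZMod u ≠ 0 := ((unitCoeff hy).isUnit.map toZMod).ne_zero
    refine ⟨a * (toZMod u)⁻¹, p ^ y.valuation, u, Prod.ext ?_ ?_⟩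
    · exact (mul_left_comm _ _ _).trans (by rw [mul_inv_cancel₀ hu, mul_one])
    · simpa using (unitCoeff_spec hy).symm

theorem snd_ne_zero_of_isOpen_topologicalClosure_zmultiples {x : ZMod p × ℤ_[p]}
    (h : IsOpen ((zmultiples x).topologicalClosure : Set (ZMod p × ℤ_[p]))) : x.2 ≠ 0 := by
  intro hx
  rw [coe_topologicalClosure_zmultiples] at h
  apply not_isOpen_singleton_zero (p := p)
  convert h.preimage (continuous_const.prodMk continuous_id (f := fun _ : ℤ_[p] => (0 : ZMod p)))
  ext y
  simp only [Set.mem_singleton_iff, Set.mem_preimage, Set.mem_range, Prod.mk.injEq, hx, mul_zero]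
  exact ⟨fun hy => ⟨0, by simp, hy.symm⟩, fun ⟨_, _, hy⟩ => hy.symm⟩

theorem mk_one_zero_notMem_topologicalClosure_zmultiples {x : ZMod p × ℤ_[p]} (hx : x.2 ≠ 0) :
    ((1 : ZMod p), (0 : ℤ_[p])) ∉ (zmultiples x).topologicalClosure := by
  rw [← SetLike.mem_coe, coe_topologicalClosure_zmultiples]
  rintro ⟨c, hc⟩
  simp only [Prod.mk.injEq, mul_eq_zero, hx, or_false] at hc
  simp [hc.2] at hc

end PadicInt

open PadicInt

/-- `C_p × ℤ_p` can be covered by countably many procyclic subgroups, but not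
by countably many open procyclic subgroups. -/
theorem cp_times_padic_procyclic_covers (p : ℕ) [Fact p.Prime] :
    (∃ H : ℕ → AddSubgroup (ZMod p × ℤ_[p]),
      (∀ n, ∃ x : ZMod p × ℤ_[p],
        H n = (AddSubgroup.zmultiples x).topologicalClosure) ∧
      ∀ g : ZMod p × ℤ_[p], ∃ n, g ∈ H n) ∧
    ¬ (∃ H : ℕ → AddSubgroup (ZMod p × ℤ_[p]),
      (∀ n, IsOpen (H n : Set (ZMod p × ℤ_[p])) ∧
        ∃ x : ZMod p × ℤ_[p],
          H n = (AddSubgroup.zmultiples x).topologicalClosure) ∧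
      ∀ g : ZMod p × ℤ_[p], ∃ n, g ∈ H n) := by
  constructor
  · obtain ⟨e, he⟩ := exists_surjective_nat (ZMod p × ℕ)
    refine ⟨fun n => (zmultiples ((e n).1, ((e n).2 : ℤ_[p]))).topologicalClosure,
      fun n => ⟨_, rfl⟩, fun g => ?_⟩
    obtain ⟨b, m, hg⟩ := exists_mem_topologicalClosure_zmultiples_natCast g
    obtain ⟨n, hn⟩ := he (b, m)
    exact ⟨n, by simpa only [hn] using hg⟩
  · rintro ⟨H, hH, hcover⟩
    obtain ⟨n, hn⟩ := hcover (1, 0)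
    obtain ⟨hopen, x, hx⟩ := hH n
    rw [hx] at hopen hn
    exact mk_one_zero_notMem_topologicalClosure_zmultiples
      (snd_ne_zero_of_isOpen_topologicalClosure_zmultiples hopen) hn
end

section
/- Suppose a word w = w(x_1, ..., x_n) has only countably many values in a profinite group G. Then the word v(x_1, ..., x_{2n}) = w(x_1, ..., x_n) · w(x_{n+1}, ..., x_{2n})^{-1} is a coset identity in G: there exist an open subgroup H ≤ G and elements a_1, ..., a_n ∈ G such that w(g_1, ..., g_n) = w(g_1', ..., g_n') for all g_i, g_i' ∈ a_iH. -/
/-!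
The fibres of the word map `Gⁿ → G` are closed and, by assumption, countably many; they cover the
compact Hausdorff space `Gⁿ`, so by the Baire category theorem one of them contains an open
neighbourhood of some `a ∈ Gⁿ`. In a profinite group the open subgroups form a base of
neighbourhoods of `1`, so that neighbourhood contains a box `a₁H × ⋯ × aₙH`, on which the word
map is constant.
-/

open scoped Pointwise Topology

theorem FreeGroup.continuous_lift_apply {α G : Type*} [Group G] [TopologicalSpace G]
    [ContinuousMul G] [ContinuousInv G] (w : FreeGroup α) :
    Continuous fun g : α → G => FreeGroup.lift g w := by
  induction w using FreeGroup.induction_on with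
  | C1 => simpa using continuous_const
  | of i => simpa using continuous_apply i
  | inv_of i h => simp only [_root_.map_inv]; exact h.inv
  | mul x y hx hy => simp only [_root_.map_mul]; exact hx.mul hy

theorem Continuous.exists_eventually_eq_of_countable_range {X Y : Type*} [TopologicalSpace X]
    [BaireSpace X] [Nonempty X] [TopologicalSpace Y] [T1Space Y] {f : X → Y}
    (hf : Continuous f) (hcount : (Set.range f).Countable) :
    ∃ a, ∀ᶠ x in 𝓝 a, f x = f a := by
  have : Countable (Set.range f) := hcount.to_subtype
  have hcover : ⋃ u : Set.range f, f ⁻¹' {(u : Y)} = Set.univ :=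
    Set.eq_univ_of_forall fun x => Set.mem_iUnion.2 ⟨⟨f x, x, rfl⟩, rfl⟩
  obtain ⟨u, a, ha⟩ :=
    nonempty_interior_of_iUnion_of_closed (fun _ => isClosed_singleton.preimage hf) hcover
  have hfa : f a = u := (interior_subset ha : a ∈ f ⁻¹' {(u : Y)})
  refine ⟨a, ?_⟩
  filter_upwards [mem_interior_iff_mem_nhds.1 ha] with x (hx : f x = u)
  exact hx.trans hfa.symm

theorem ProfiniteGrp.exists_openSubgroup_pi_smul_subset_of_mem_nhds {ι G : Type*} [Group G]
    [TopologicalSpace G] [IsTopologicalGroup G] [CompactSpace G] [TotallyDisconnectedSpace G]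
    {a : ι → G} {N : Set (ι → G)} (hN : N ∈ 𝓝 a) :
    ∃ H : OpenSubgroup G, Set.univ.pi (fun i => a i • (H : Set G)) ⊆ N := by
  -- `N` constrains only the finitely many coordinates in `I`, so one subgroup serves them all.
  obtain ⟨I, t, ht, htN⟩ := Filter.mem_pi'.1 (nhds_pi (a := a) ▸ hN)
  have hV : (⋂ i ∈ I, (a i)⁻¹ • t i) ∈ 𝓝 (1 : G) :=
    (Filter.biInter_finset_mem I).2 fun i _ => by
      simpa using (smul_mem_nhds_smul_iff (a i)⁻¹).2 (ht i)
  obtain ⟨H, hH⟩ := ProfiniteGrp.exist_openNormalSubgroup_sub_open_nhds_of_one isOpen_interior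
    (mem_interior_iff_mem_nhds.2 hV)
  refine ⟨H.toOpenSubgroup, fun g hg => htN fun i hi => ?_⟩
  have hgi := hH (Set.mem_smul_set_iff_inv_smul_mem.1 (hg i trivial))
  exact (Set.smul_mem_smul_set_iff (a := (a i)⁻¹)).1
    (Set.mem_iInter₂.1 (interior_subset hgi) i hi)

theorem coset_identity_of_countably_many_word_values_general {G : Type*} [Group G]
    [TopologicalSpace G] [IsTopologicalGroup G] [CompactSpace G]
    [TotallyDisconnectedSpace G] {n : ℕ} (wrd : FreeGroup (Fin n))
    (hcount : (Set.range fun g : Fin n → G => FreeGroup.lift g wrd).Countable) :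
    ∃ H : Subgroup G, IsOpen (H : Set G) ∧ ∃ a : Fin n → G,
      ∀ g g' : Fin n → G, (∀ i, g i ∈ a i • (H : Set G)) →
        (∀ i, g' i ∈ a i • (H : Set G)) →
        FreeGroup.lift g wrd = FreeGroup.lift g' wrd := by
  obtain ⟨a, hconst⟩ :=
    (FreeGroup.continuous_lift_apply wrd).exists_eventually_eq_of_countable_range hcount
  obtain ⟨H, hH⟩ := ProfiniteGrp.exists_openSubgroup_pi_smul_subset_of_mem_nhds hconst
  refine ⟨H, H.isOpen, a, fun g g' hg hg' => ?_⟩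
  exact (hH fun i _ => hg i).trans (hH fun i _ => hg' i).symm

/-- If a word `w` in `n` variables has only countably many values in a
profinite group `G`, then `w(x₁,…,xₙ)w(x_{n+1},…,x_{2n})⁻¹` is a coset
identity: there are an open subgroup `H` and elements `a₁,…,aₙ` such that `w`
is constant on the cosets `a₁H × ⋯ × aₙH`. -/
theorem coset_identity_of_countably_many_word_values {G : Type*} [Group G]
    [TopologicalSpace G] [IsTopologicalGroup G] [CompactSpace G] [T2Space G]
    [TotallyDisconnectedSpace G] {n : ℕ} (wrd : FreeGroup (Fin n))
    (hcount : (Set.range fun g : Fin n → G => FreeGroup.lift g wrd).Countable) :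
    ∃ H : Subgroup G, IsOpen (H : Set G) ∧ ∃ a : Fin n → G,
      ∀ g g' : Fin n → G, (∀ i, g i ∈ a i • (H : Set G)) →
        (∀ i, g' i ∈ a i • (H : Set G)) →
        FreeGroup.lift g wrd = FreeGroup.lift g' wrd :=
  coset_identity_of_countably_many_word_values_general wrd hcount
end

section
/- Let G be an m-generated group such that every element of the commutator subgroup G' is a product of at most r commutators. Then for every k ≥ 0 there is a number t = t(r, k) such that every δ_k-commutator in elements of G' is a product of at most t elements that are δ_{k+1}-commutators in elements of G. -/
open scoped commutatorElement

/-- `deltaValues H k` is the set of `δ_k`-commutators in elements of the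
subgroup `H`: `δ₀`-values are the elements of `H`, and `δ_{k+1}`-values are
commutators of two `δ_k`-values. -/
def deltaValues {G : Type*} [Group G] (H : Subgroup G) : ℕ → Set G
  | 0 => (H : Set G)
  | (k + 1) => {x : G | ∃ a ∈ deltaValues H k, ∃ b ∈ deltaValues H k, x = ⁅a, b⁆}

/-!
Write `S ^ n` for the set of products of `n` elements of `S`, and let `T_k` be the set of
`δ_k`-commutators in `G`, a conjugation-invariant set containing `1`. The identities
`⁅a * x, b⁆ = a ⁅x, b⁆ a⁻¹ * ⁅a, b⁆` and `⁅x, y * b⁆ = ⁅x, y⁆ * y ⁅x, b⁆ y⁻¹` show that the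
commutator of an element of `T_k ^ p` with an element of `T_k ^ q` lies in `T_{k+1} ^ (p * q)`.
Starting from `G' ⊆ T_1 ^ r` and inducting on `k` gives `δ_k(G') ⊆ T_{k+1} ^ (r ^ 2 ^ k)`.
-/

open scoped Pointwise

namespace Set

theorem mem_pow_iff_exists_list {M : Type*} [Monoid M] {S : Set M} {n : ℕ} {a : M} :
    a ∈ S ^ n ↔ ∃ l : List M, l.length = n ∧ (∀ y ∈ l, y ∈ S) ∧ l.prod = a := by
  induction n generalizing a with
  | zero => simp [eq_comm]
  | succ n ih =>
    rw [pow_succ', mem_mul]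
    constructor
    · rintro ⟨s, hs, x, hx, rfl⟩
      obtain ⟨l, hlen, hl, rfl⟩ := ih.1 hx
      exact ⟨s :: l, by simp [hlen], by simpa [hs] using hl, rfl⟩
    · rintro ⟨_ | ⟨s, l⟩, hlen, hl, rfl⟩
      · simp at hlen
      · simp only [List.mem_cons, forall_eq_or_imp] at hl
        exact ⟨s, hl.1, l.prod, ih.2 ⟨l, by simpa using hlen, hl.2, rfl⟩, rfl⟩

variable {G : Type*} [Group G] {S A B : Set G}

theorem conj_mem_pow (hS : ∀ c, ∀ s ∈ S, c * s * c⁻¹ ∈ S) (c : G) {n : ℕ} {x : G}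
    (hx : x ∈ S ^ n) : c * x * c⁻¹ ∈ S ^ n := by
  have hconj : MulAut.conj c '' S ⊆ S := by
    rintro _ ⟨s, hs, rfl⟩
    exact hS c s hs
  have : MulAut.conj c x ∈ (MulAut.conj c '' S) ^ n := by
    rw [← image_pow]
    exact mem_image_of_mem _ hx
  exact pow_subset_pow_left hconj this

theorem commutatorElement_mem_pow_left (hS : ∀ c, ∀ s ∈ S, c * s * c⁻¹ ∈ S)
    {b : G} (hAb : ∀ a ∈ A, ⁅a, b⁆ ∈ S) {p : ℕ} {x : G} (hx : x ∈ A ^ p) :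
    ⁅x, b⁆ ∈ S ^ p := by
  induction p generalizing x with
  | zero =>
    obtain rfl : x = 1 := by simpa using hx
    simp
  | succ p ih =>
    rw [pow_succ', mem_mul] at hx
    obtain ⟨a, ha, x, hx, rfl⟩ := hx
    rw [commutatorElement_mul_left_eq_conj_mul, pow_succ]
    exact mul_mem_mul (conj_mem_pow hS a (ih hx)) (hAb a ha)

theorem commutatorElement_mem_pow (hS : ∀ c, ∀ s ∈ S, c * s * c⁻¹ ∈ S)
    (hAB : ∀ a ∈ A, ∀ b ∈ B, ⁅a, b⁆ ∈ S) {p q : ℕ} {x y : G} (hx : x ∈ A ^ p)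
    (hy : y ∈ B ^ q) : ⁅x, y⁆ ∈ S ^ (p * q) := by
  induction q generalizing y with
  | zero =>
    obtain rfl : y = 1 := by simpa using hy
    simp
  | succ q ih =>
    rw [pow_succ, mem_mul] at hy
    obtain ⟨y, hy, b, hb, rfl⟩ := hy
    have hxb : ⁅x, b⁆ ∈ S ^ p := commutatorElement_mem_pow_left hS (fun a ha => hAB a ha b hb) hx
    rw [commutatorElement_mul_right_eq_mul_conj, mul_assoc, mul_assoc, ← mul_assoc y,
      Nat.mul_succ, pow_add]
    exact mul_mem_mul (ih hy) (conj_mem_pow hS y hxb)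

end Set

section deltaValues

variable {G : Type*} [Group G]

theorem one_mem_deltaValues (H : Subgroup G) : ∀ k, (1 : G) ∈ deltaValues H k
  | 0 => H.one_mem
  | k + 1 => ⟨1, one_mem_deltaValues H k, 1, one_mem_deltaValues H k, by simp⟩

theorem conj_mem_deltaValues {H : Subgroup G} [H.Normal] (c : G) :
    ∀ {k : ℕ} {x : G}, x ∈ deltaValues H k → c * x * c⁻¹ ∈ deltaValues H k
  | 0, _, hx => Subgroup.Normal.conj_mem inferInstance _ hx c
  | _ + 1, _, ⟨a, ha, b, hb, rfl⟩ =>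
    ⟨_, conj_mem_deltaValues c ha, _, conj_mem_deltaValues c hb, conjugate_commutatorElement a b c⟩

theorem deltaValues_subset_pow {H K : Subgroup G} [K.Normal] {r : ℕ}
    (hH : (H : Set G) ⊆ deltaValues K 1 ^ r) :
    ∀ k, deltaValues H k ⊆ deltaValues K (k + 1) ^ (r ^ 2 ^ k)
  | 0 => by simpa [deltaValues] using hH
  | k + 1 => by
    rintro _ ⟨a, ha, b, hb, rfl⟩
    rw [pow_succ, pow_mul, sq]
    exact Set.commutatorElement_mem_pow (S := deltaValues K (k + 2))
      (fun c _ => conj_mem_deltaValues c)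
      (fun a ha b hb => ⟨a, ha, b, hb, rfl⟩)
      (deltaValues_subset_pow hH k ha) (deltaValues_subset_pow hH k hb)

end deltaValues

/-- If `G` is an `m`-generated group in which every element of `G'` is a
product of at most `r` commutators, then every `δ_k`-commutator in elements of
`G'` is a product of at most `t(r, k)` many `δ_{k+1}`-commutators in elements
of `G`, where `t` depends only on `r` and `k`. -/
theorem deltaValues_in_derived_subgroup :
    ∃ t : ℕ → ℕ → ℕ, ∀ (G : Type) [Group G] (m r : ℕ),
      (∃ S : Finset G, S.card ≤ m ∧ Subgroup.closure (S : Set G) = ⊤) →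
      (∀ x ∈ commutator G, ∃ l : List G, l.length ≤ r ∧
        (∀ y ∈ l, ∃ a b : G, y = ⁅a, b⁆) ∧ l.prod = x) →
      ∀ k : ℕ, ∀ g ∈ deltaValues (commutator G) k,
        ∃ l : List G, l.length ≤ t r k ∧
          (∀ y ∈ l, y ∈ deltaValues (⊤ : Subgroup G) (k + 1)) ∧ l.prod = g := by
  refine ⟨fun r k => r ^ 2 ^ k, fun G _ m r _ hr k g hg => ?_⟩
  have hG' : (commutator G : Set G) ⊆ deltaValues ⊤ 1 ^ r := by
    intro x hx
    obtain ⟨l, hlen, hl, rfl⟩ := hr x hx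
    refine Set.pow_subset_pow_right (one_mem_deltaValues ⊤ 1) hlen
      (Set.mem_pow_iff_exists_list.2 ⟨l, rfl, fun y hy => ?_, rfl⟩)
    obtain ⟨a, b, rfl⟩ := hl y hy
    exact ⟨a, trivial, b, trivial, rfl⟩
  obtain ⟨l, hlen, hl, hprod⟩ := Set.mem_pow_iff_exists_list.1 (deltaValues_subset_pow hG' k hg)
  exact ⟨l, hlen.le, hl, hprod⟩
end
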